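/- arXiv:1602.04287 — 4 statements merged into one kernel-verified Lean document; each statement's English description precedes it below -/
import Mathlib

section
/- Let Σ be a k×k symmetric positive definite real matrix, σ > 0, and x ∈ ℝ^k. Then the maximum of ⟨v, x⟩ over all pairs (v, λ) with v ∈ ℝ^k, λ ≤ σ², and the (k+1)×(k+1) block matrix [[λ, vᵀ],[v, Σ]] positive definite, equals σ·√(xᵀ Σ x). -/
/-!
By the Schur complement, the block matrix `[[λ, vᵀ], [v, Σ]]` is positive definite exactly when
`vᵀ Σ⁻¹ v < λ`, so the set in question is the image under `⟨·, x⟩` of the open ellipsoid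
`vᵀ Σ⁻¹ v < σ²`. Cauchy–Schwarz for the inner product given by `Σ⁻¹`, applied to `v` and `Σ x`,
bounds `⟨v, x⟩` by `σ √(xᵀ Σ x)`, and the multiples `t σ / √(xᵀ Σ x) • Σ x` with `|t| < 1` lie in
the ellipsoid and approach the bound as `t → 1`.
-/

open Matrix Set

namespace Matrix

theorem posDef_fromBlocks₂₂_iff {m n R : Type*} [Fintype m] [Fintype n] [DecidableEq n]
    [CommRing R] [PartialOrder R] [StarRing R] [StarOrderedRing R]
    (A : Matrix m m R) (B : Matrix m n R) {D : Matrix n n R} (hD : D.PosDef) [Invertible D] :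
    (fromBlocks A B Bᴴ D).PosDef ↔ (A - B * D⁻¹ * Bᴴ).PosDef := by
  constructor
  · intro h
    refine .of_dotProduct_mulVec_pos ((PosDef.fromBlocks₂₂ A B hD).mp h.posSemidef).1
      fun x hx => ?_
    have hxy : x ⊕ᵥ -((D⁻¹ * Bᴴ) *ᵥ x) ≠ 0 := fun h0 => hx (funext fun i => congrFun h0 (.inl i))
    have := h.dotProduct_mulVec_pos hxy
    rwa [dotProduct_mulVec, schur_complement_eq₂₂ A B _ _ hD.1, add_neg_cancel, star_zero,
      zero_vecMul, zero_dotProduct, zero_add, ← dotProduct_mulVec] at this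
  · intro h
    refine .of_dotProduct_mulVec_pos ((PosDef.fromBlocks₂₂ A B hD).mpr h.posSemidef).1
      fun z hz => ?_
    rw [← Sum.elim_comp_inl_inr z, dotProduct_mulVec, schur_complement_eq₂₂ A B _ _ hD.1,
      ← dotProduct_mulVec, ← dotProduct_mulVec]
    by_cases hx : z ∘ Sum.inl = 0
    · have hy : z ∘ Sum.inr ≠ 0 := fun hy => hz <| by
        rw [← Sum.elim_comp_inl_inr z, hx, hy]
        ext (_ | _) <;> rfl
      rw [hx, mulVec_zero, zero_add]
      exact add_pos_of_pos_of_nonneg (hD.dotProduct_mulVec_pos hy) (by simp)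
    · exact add_pos_of_nonneg_of_pos (hD.posSemidef.dotProduct_mulVec_nonneg _)
        (h.dotProduct_mulVec_pos hx)

theorem posDef_of_const_iff {ι : Type*} [Unique ι] (c : ℝ) :
    (of fun _ _ : ι => c).PosDef ↔ 0 < c := by
  rw [show (of fun _ _ : ι => c) = diagonal fun _ => c by
    ext i j; simp [Subsingleton.elim i j], posDef_diagonal_iff]
  simp

theorem posDef_fromBlocks_replicateRow_iff {ι n : Type*} [Unique ι] [Fintype n] [DecidableEq n]
    {D : Matrix n n ℝ} (hD : D.PosDef) (l : ℝ) (v : n → ℝ) :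
    (fromBlocks (of fun _ _ : ι => l) (replicateRow ι v) (replicateCol ι v) D).PosDef ↔
      v ⬝ᵥ D⁻¹ *ᵥ v < l := by
  have := hD.isUnit.invertible
  have hC : replicateCol ι v = (replicateRow ι v)ᴴ := by simp
  rw [hC, posDef_fromBlocks₂₂_iff _ _ hD, ← replicateRow_vecMul, conjTranspose_replicateRow,
    star_trivial, replicateRow_mul_replicateCol, ← dotProduct_mulVec]
  exact (posDef_of_const_iff _).trans sub_pos

section Ellipsoid

variable {n : Type*} [Fintype n] {S : Matrix n n ℝ}

theorem IsHermitian.mulVec_dotProduct (hS : S.IsHermitian) (x w : n → ℝ) :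
    S *ᵥ x ⬝ᵥ w = x ⬝ᵥ S *ᵥ w := by
  rw [dotProduct_mulVec, ← mulVec_transpose, ← conjTranspose_eq_transpose_of_trivial, hS.eq,
    dotProduct_comm]

variable [DecidableEq n]

theorem PosDef.inv_mulVec_mulVec (hS : S.PosDef) (w : n → ℝ) : S⁻¹ *ᵥ S *ᵥ w = w := by
  rw [mulVec_mulVec, nonsing_inv_mul _ ((isUnit_iff_isUnit_det S).mp hS.isUnit), one_mulVec]

theorem PosDef.dotProduct_sq_le (hS : S.PosDef) (v x : n → ℝ) :
    (v ⬝ᵥ x) ^ 2 ≤ (v ⬝ᵥ S⁻¹ *ᵥ v) * (x ⬝ᵥ S *ᵥ x) := by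
  have key := LinearMap.BilinForm.apply_mul_apply_le_of_forall_zero_le (toLinearMap₂' ℝ S⁻¹)
    (fun u => by simpa only [toLinearMap₂'_apply', star_trivial] using
      hS.inv.posSemidef.dotProduct_mulVec_nonneg u) v (S *ᵥ x)
  simp only [toLinearMap₂'_apply', hS.inv_mulVec_mulVec] at key
  rwa [dotProduct_comm (S *ᵥ x), hS.inv.1.mulVec_dotProduct, hS.inv_mulVec_mulVec,
    dotProduct_comm (S *ᵥ x), ← sq] at key

theorem PosDef.dotProduct_le_mul_sqrt (hS : S.PosDef) {r : ℝ} (hr : 0 ≤ r) {v : n → ℝ}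
    (hv : v ⬝ᵥ S⁻¹ *ᵥ v ≤ r ^ 2) (x : n → ℝ) : v ⬝ᵥ x ≤ r * √(x ⬝ᵥ S *ᵥ x) := by
  have hx : 0 ≤ x ⬝ᵥ S *ᵥ x := by simpa using hS.posSemidef.dotProduct_mulVec_nonneg x
  calc v ⬝ᵥ x ≤ |v ⬝ᵥ x| := le_abs_self _
    _ ≤ √(r ^ 2 * (x ⬝ᵥ S *ᵥ x)) :=
      Real.abs_le_sqrt ((hS.dotProduct_sq_le v x).trans (by gcongr))
    _ = r * √(x ⬝ᵥ S *ᵥ x) := by rw [Real.sqrt_mul (sq_nonneg r), Real.sqrt_sq hr]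

theorem PosDef.isLUB_image_dotProduct (hS : S.PosDef) {r : ℝ} (hr : 0 < r) (x : n → ℝ) :
    IsLUB ((· ⬝ᵥ x) '' {v | v ⬝ᵥ S⁻¹ *ᵥ v < r ^ 2}) (r * √(x ⬝ᵥ S *ᵥ x)) := by
  refine isLUB_of_mem_closure ?_ ?_
  · rintro _ ⟨v, hv, rfl⟩
    exact hS.dotProduct_le_mul_sqrt hr.le hv.le x
  set q := x ⬝ᵥ S *ᵥ x
  have hq : 0 ≤ q := by simpa using hS.posSemidef.dotProduct_mulVec_nonneg x
  have hpair (c : ℝ) : c • S *ᵥ x ⬝ᵥ x = c * q := by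
    rw [smul_dotProduct, smul_eq_mul, dotProduct_comm]
  have hquad (c : ℝ) : c • S *ᵥ x ⬝ᵥ S⁻¹ *ᵥ (c • S *ᵥ x) = c ^ 2 * q := by
    rw [mulVec_smul, hS.inv_mulVec_mulVec, dotProduct_smul, hpair, smul_eq_mul]
    ring
  have hsub : (· * (r * √q)) '' Ioo (-1) 1 ⊆ (· ⬝ᵥ x) '' {v | v ⬝ᵥ S⁻¹ *ᵥ v < r ^ 2} := by
    rintro _ ⟨t, ht, rfl⟩
    refine ⟨(t * r / √q) • S *ᵥ x, ?_, ?_⟩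
    · have ht2 : t ^ 2 < 1 := by rw [sq_lt_one_iff_abs_lt_one, abs_lt]; exact ht
      -- `q / q` rather than `1`, to cover `q = 0`
      calc _ = (t * r) ^ 2 * (q / q) := by
            rw [hquad, div_pow, Real.sq_sqrt hq]
            ring
        _ ≤ (t * r) ^ 2 := mul_le_of_le_one_right (sq_nonneg _) (div_self_le_one q)
        _ < r ^ 2 := by rw [mul_pow]; exact mul_lt_of_lt_one_left (pow_pos hr 2) ht2
    · dsimp only
      rw [hpair, div_mul_eq_mul_div, mul_div_assoc, Real.div_sqrt]
      ring
  have hclosure := image_closure_subset_closure_image (f := (· * (r * √q)))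
    (by fun_prop) ⟨1, by rw [closure_Ioo (by norm_num : (-1 : ℝ) ≠ 1)]; norm_num, one_mul _⟩
  exact closure_mono hsub hclosure

end Ellipsoid

end Matrix

open Matrix in
/-- The supremum of `⟨v, x⟩` over pairs `(v, λ)` with `λ ≤ σ²` and the block matrix
`[[λ, vᵀ],[v, Σ]]` positive definite equals `σ·√(xᵀΣx)`, for `Σ` symmetric positive
definite and `σ > 0`. -/
theorem stmt0 (k : ℕ) (S : Matrix (Fin k) (Fin k) ℝ) (hS : S.PosDef)
    (σ : ℝ) (hσ : 0 < σ) (x : Fin k → ℝ) :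
    sSup {y : ℝ | ∃ (v : Fin k → ℝ) (l : ℝ), l ≤ σ ^ 2 ∧
        (Matrix.fromBlocks (Matrix.of fun _ _ : Fin 1 => l)
          (Matrix.of fun _ j => v j) (Matrix.of fun i _ => v i) S).PosDef ∧
        y = v ⬝ᵥ x} =
      σ * Real.sqrt (x ⬝ᵥ S.mulVec x) := by
  refine (congrArg sSup ?_).trans <| (hS.isLUB_image_dotProduct hσ x).csSup_eq
    ⟨0, 0, by simpa using pow_pos hσ 2, zero_dotProduct x⟩
  ext y
  constructor
  · rintro ⟨v, l, hl, hpd, rfl⟩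
    exact ⟨v, ((posDef_fromBlocks_replicateRow_iff hS l v).mp hpd).trans_le hl, rfl⟩
  · rintro ⟨v, hv, rfl⟩
    exact ⟨v, σ ^ 2, le_rfl, (posDef_fromBlocks_replicateRow_iff hS _ v).mpr hv, rfl⟩
end

section
/- Let λ ≤ σ², w > 0, v ∈ ℝ^k, and suppose c := vᵀ(Σ+W)⁻¹v and d := vᵀ(Σ+W)⁻¹Σ(Σ+W)⁻¹v satisfy 0 ≤ d ≤ c ≤ λ. Then ((λ + d − c)(λ + w²)) / (λ + w² − c)² ≤ λ(λ + w²)/w⁴ ≤ σ²/w² + σ⁴/w⁴. -/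
/-- Scalar bound on the per-step bias increase: if `λ ≤ σ²`, `w > 0`, and
`0 ≤ d ≤ c ≤ λ`, then `((λ + d − c)(λ + w²)) / (λ + w² − c)² ≤ λ(λ + w²)/w⁴ ≤ σ²/w² + σ⁴/w⁴`. -/
theorem stmt5 (σ l w c d : ℝ) (hl : l ≤ σ ^ 2) (hw : 0 < w)
    (hd : 0 ≤ d) (hdc : d ≤ c) (hcl : c ≤ l) :
    ((l + d - c) * (l + w ^ 2)) / (l + w ^ 2 - c) ^ 2 ≤ l * (l + w ^ 2) / w ^ 4 ∧
      l * (l + w ^ 2) / w ^ 4 ≤ σ ^ 2 / w ^ 2 + σ ^ 4 / w ^ 4 := by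
  have hw2 : (0:ℝ) < w ^ 2 := by positivity
  have hw4 : (0:ℝ) < w ^ 4 := by positivity
  have hc0 : 0 ≤ c := le_trans hd hdc
  have hl0 : 0 ≤ l := le_trans hc0 hcl
  have hden : (0:ℝ) < (l + w ^ 2 - c) ^ 2 := by nlinarith
  have hsum : (0:ℝ) ≤ l + w ^ 2 := by linarith
  have h2 : w ^ 4 ≤ (l + w ^ 2 - c) ^ 2 := by
    nlinarith [mul_nonneg (sub_nonneg.2 hcl) (sub_nonneg.2 hcl),
      mul_nonneg (sub_nonneg.2 hcl) hw2.le]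
  constructor
  · rw [div_le_div_iff₀ hden hw4]
    calc (l + d - c) * (l + w ^ 2) * w ^ 4
        ≤ l * (l + w ^ 2) * w ^ 4 := by
          nlinarith [mul_nonneg (mul_nonneg (sub_nonneg.2 hdc) hsum) hw4.le]
      _ ≤ l * (l + w ^ 2) * (l + w ^ 2 - c) ^ 2 :=
          mul_le_mul_of_nonneg_left h2 (mul_nonneg hl0 hsum)
  · have h1 : l * l ≤ σ ^ 2 * σ ^ 2 := mul_le_mul hl hl hl0 (le_trans hl0 hl)
    have hkey : l * (l + w ^ 2) ≤ σ ^ 4 + σ ^ 2 * w ^ 2 := by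
      nlinarith [mul_le_mul_of_nonneg_right hl hw2.le]
    rw [div_add_div _ _ (ne_of_gt hw2) (ne_of_gt hw4), div_le_div_iff₀ hw4 (by positivity)]
    nlinarith [mul_le_mul_of_nonneg_right hkey (by positivity : (0:ℝ) ≤ w ^ 6)]
end

section
/- Let λ, w², c, d be reals with 0 ≤ d ≤ c and c < λ + w², λ ≤ σ², w > 0. Then the maximum over such (λ, c, d) of ((λ + d − c)(λ + w²))/((λ + w² − c)²) is at most σ²/w² + σ⁴/w⁴. -/
/-- The maximum of `((λ + d − c)(λ + w²))/(λ + w² − c)²` over reals with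
`0 ≤ d ≤ c ≤ λ`, `c < λ + w²`, `λ ≤ σ²`, `w > 0` is at most `σ²/w² + σ⁴/w⁴`. -/
theorem stmt18 (σ w : ℝ) (hσ : 0 < σ) (hw : 0 < w) :
    ∀ l c d : ℝ, 0 ≤ d → d ≤ c → c ≤ l → c < l + w ^ 2 → l ≤ σ ^ 2 →
      ((l + d - c) * (l + w ^ 2)) / (l + w ^ 2 - c) ^ 2 ≤ σ ^ 2 / w ^ 2 + σ ^ 4 / w ^ 4 := by
  intro l c d hd hdc hcl hclt hlσ
  have hl : 0 ≤ l := le_trans (le_trans hd hdc) hcl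
  have h1 : (l + d - c) * (l + w ^ 2) ≤ σ ^ 2 * (σ ^ 2 + w ^ 2) := by
    apply mul_le_mul
    · nlinarith
    · nlinarith
    · nlinarith
    · positivity
  have h2 : w ^ 4 ≤ (l + w ^ 2 - c) ^ 2 := by nlinarith [sq_nonneg w, sq_nonneg (l - c)]
  have key : ((l + d - c) * (l + w ^ 2)) / (l + w ^ 2 - c) ^ 2
      ≤ (σ ^ 2 * (σ ^ 2 + w ^ 2)) / w ^ 4 :=
    div_le_div₀ (by positivity) h1 (by positivity) h2
  calc ((l + d - c) * (l + w ^ 2)) / (l + w ^ 2 - c) ^ 2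
      ≤ (σ ^ 2 * (σ ^ 2 + w ^ 2)) / w ^ 4 := key
    _ = σ ^ 2 / w ^ 2 + σ ^ 4 / w ^ 4 := by field_simp; ring
end

section
/- Fix σ > 0, k ≥ 2, and C = 1/(2√3). Then min over (u₁,…,u_{k−1}) with uᵢ > 0 of max( max_i (σ² + uᵢ), (C²/(k−1))·(Σᵢ min(σ²/√uᵢ, σ))² ) ≥ C·√(k−1)·σ². -/
/-- Balancing the per-round noise cost `σ² + uᵢ` against the adaptive-bias term
`(C²/(k−1))·(Σᵢ min(σ²/√uᵢ, σ))²` with `C = 1/(2√3)`: for any positive expected noise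
variances `u₁, …, u_{k−1}`, the maximum of the two branches is at least `C·√(k−1)·σ²`. -/
theorem stmt19 (k : ℕ) (hk : 2 ≤ k) (σ : ℝ) (hσ : 0 < σ)
    (C : ℝ) (hC : C = 1 / (2 * Real.sqrt 3)) :
    ∀ u : Fin (k - 1) → ℝ, (∀ i, 0 < u i) →
      C * Real.sqrt (k - 1) * σ ^ 2 ≤
        max (Finset.univ.sup' (by
              have : 0 < k - 1 := by omega
              exact Finset.univ_nonempty_iff.mpr (Fin.pos_iff_nonempty.mp this))
            (fun i => σ ^ 2 + u i))
          ((C ^ 2 / (k - 1)) * (∑ i, min (σ ^ 2 / Real.sqrt (u i)) σ) ^ 2) := by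
  intro u hu
  have hk2 : (2:ℝ) ≤ (k:ℝ) := by exact_mod_cast hk
  have hn0 : (0:ℝ) < (k:ℝ) - 1 := by linarith
  have hC0 : 0 < C := by
    rw [hC]
    have : (0:ℝ) < Real.sqrt 3 := Real.sqrt_pos.mpr (by norm_num)
    positivity
  set T := C * Real.sqrt ((k:ℝ) - 1) * σ ^ 2 with hT
  have hT0 : 0 < T := by
    have := Real.sqrt_pos.mpr hn0
    positivity
  by_contra hcon
  push_neg at hcon
  rw [max_lt_iff] at hcon
  obtain ⟨h1, h2⟩ := hcon
  rw [Finset.sup'_lt_iff] at h1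
  have hq : ∀ i : Fin (k-1), σ ^ 2 + u i < T := fun i => h1 i (Finset.mem_univ i)
  have hpos : 0 < k - 1 := by omega
  obtain ⟨i0⟩ := Fin.pos_iff_nonempty.mp hpos
  have hσT : σ ^ 2 < T := lt_of_le_of_lt (by have := hu i0; linarith) (hq i0)
  have hsqrtT : σ < Real.sqrt T := (Real.lt_sqrt hσ.le).mpr hσT
  -- each min term is at least σ²/√T
  have hmin : ∀ i : Fin (k-1), σ ^ 2 / Real.sqrt T ≤ min (σ ^ 2 / Real.sqrt (u i)) σ := by
    intro i
    have hui : u i < T := by have := hq i; nlinarith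
    have hsu : Real.sqrt (u i) ≤ Real.sqrt T := Real.sqrt_le_sqrt hui.le
    have hsu0 : 0 < Real.sqrt (u i) := Real.sqrt_pos.mpr (hu i)
    refine le_min ?_ ?_
    · exact div_le_div_of_nonneg_left (by positivity) hsu0 hsu
    · rw [div_le_iff₀ (by positivity)]
      nlinarith
  have hsum : ((k:ℝ) - 1) * (σ ^ 2 / Real.sqrt T) ≤
      ∑ i, min (σ ^ 2 / Real.sqrt (u i)) σ := by
    have := Finset.card_nsmul_le_sum Finset.univ (fun i => min (σ ^ 2 / Real.sqrt (u i)) σ)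
      (σ ^ 2 / Real.sqrt T) (fun i _ => hmin i)
    have hcard : ((Finset.univ : Finset (Fin (k-1))).card : ℝ) = (k:ℝ) - 1 := by
      simp [Nat.cast_sub (by omega : 1 ≤ k)]
    calc ((k:ℝ) - 1) * (σ ^ 2 / Real.sqrt T)
        = ((Finset.univ : Finset (Fin (k-1))).card : ℝ) * (σ ^ 2 / Real.sqrt T) := by
          rw [hcard]
      _ ≤ _ := by simpa [nsmul_eq_mul] using this
  -- the bias branch is then at least T
  have hbias : T ≤ (C ^ 2 / ((k:ℝ) - 1)) * (∑ i, min (σ ^ 2 / Real.sqrt (u i)) σ) ^ 2 := by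
    have hS0 : 0 ≤ ((k:ℝ) - 1) * (σ ^ 2 / Real.sqrt T) := by positivity
    have hsq : (((k:ℝ) - 1) * (σ ^ 2 / Real.sqrt T)) ^ 2 ≤
        (∑ i, min (σ ^ 2 / Real.sqrt (u i)) σ) ^ 2 :=
      pow_le_pow_left₀ hS0 hsum 2
    have hkey : (C ^ 2 / ((k:ℝ) - 1)) * ((((k:ℝ) - 1) * (σ ^ 2 / Real.sqrt T)) ^ 2) = T := by
      have hTsq : Real.sqrt T ^ 2 = T := Real.sq_sqrt hT0.le
      have hnsq : Real.sqrt ((k:ℝ) - 1) ^ 2 = (k:ℝ) - 1 := Real.sq_sqrt hn0.le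
      have hsT : (0:ℝ) < Real.sqrt T := Real.sqrt_pos.mpr hT0
      have hT2 : T ^ 2 = C ^ 2 * ((k:ℝ) - 1) * σ ^ 4 := by
        rw [hT, mul_pow, mul_pow, hnsq]; ring
      field_simp
      nlinarith [hT2]
    calc T = (C ^ 2 / ((k:ℝ) - 1)) * ((((k:ℝ) - 1) * (σ ^ 2 / Real.sqrt T)) ^ 2) := hkey.symm
      _ ≤ _ := by
        apply mul_le_mul_of_nonneg_left hsq
        positivity
  linarith [hbias, h2]
end
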